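/- If N is a PPTq operation from matrices on ℂ^{d_A}⊗ℂ^{d_B} to matrices on ℂ^{d_{A'}}⊗ℂ^{d_{B'}} and ρ is a bipartite quasi-state with N(ρ) = σ, then ‖ρ^{T_B}‖₁ ≥ ‖σ^{T_{B'}}‖₁, i.e., the logarithmic negativity satisfies E_N(ρ) ≥ E_N(σ). -/

import Mathlib

open scoped BigOperators ComplexOrder

noncomputable section

/-- Bipartite matrices on `ℂ^{IA} ⊗ ℂ^{IB}`, indexed by pairs. -/
abbrev BMat (IA IB : Type) : Type := Matrix (IA × IB) (IA × IB) ℂ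

/-- Partial transpose on the `B` system: `(X^{T_B})_{(i,j),(k,l)} = X_{(i,l),(k,j)}`. -/
def ptB {IA IB : Type} (X : BMat IA IB) : BMat IA IB :=
  fun p q => X (p.1, q.2) (q.1, p.2)

/-- Trace norm `‖X‖₁ = tr √(X† X)`. -/
noncomputable def traceNorm {n : Type} [Fintype n] [DecidableEq n]
    (X : Matrix n n ℂ) : ℝ :=
  ((((Matrix.posSemidef_conjTranspose_mul_self X).1.eigenvectorUnitary : Matrix n n ℂ) *
      Matrix.diagonal (((↑) : ℝ → ℂ) ∘ (√·) ∘ (Matrix.posSemidef_conjTranspose_mul_self X).1.eigenvalues) *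
      (star (Matrix.posSemidef_conjTranspose_mul_self X).1.eigenvectorUnitary : Matrix n n ℂ)).trace).re

/-- Operator norm (largest singular value). -/
noncomputable def opNorm {n : Type} [Fintype n] [DecidableEq n] (X : Matrix n n ℂ) : ℝ :=
  ‖Matrix.toEuclideanCLM (𝕜 := ℂ) X‖

/-- Logarithmic negativity `E_N(X) = log₂ ‖X^{T_B}‖₁`. -/
noncomputable def EN {IA IB : Type} [Fintype IA] [Fintype IB] [DecidableEq IA] [DecidableEq IB]
    (X : BMat IA IB) : ℝ :=
  Real.logb 2 (traceNorm (ptB X))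

/-- The extension `id_k ⊗ f` of a map on matrices, acting blockwise. -/
def extMap {I J : Type} (f : Matrix I I ℂ → Matrix J J ℂ) (k : ℕ)
    (M : Matrix (Fin k × I) (Fin k × I) ℂ) : Matrix (Fin k × J) (Fin k × J) ℂ :=
  fun p q => f (fun i i' => M (p.1, i) (q.1, i')) p.2 q.2

/-- A map on matrices is completely positive if all its extensions `id_k ⊗ f`
map positive semidefinite matrices to positive semidefinite matrices. -/
def CompletelyPositive {I J : Type} [Fintype I] [Fintype J]
    (f : Matrix I I ℂ → Matrix J J ℂ) : Prop :=
  ∀ (k : ℕ) (M : Matrix (Fin k × I) (Fin k × I) ℂ), M.PosSemidef → (extMap f k M).PosSemidef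

/-- A PPTq operation: a Hermitian-preserving, trace-preserving linear map `N`
such that `T_{B'} ∘ N ∘ T_B` is completely positive. -/
def IsPPTq {IA IB JA JB : Type} [Fintype IA] [Fintype IB] [Fintype JA] [Fintype JB]
    (N : BMat IA IB →ₗ[ℂ] BMat JA JB) : Prop :=
  (∀ X : BMat IA IB, X.IsHermitian → (N X).IsHermitian) ∧
  (∀ X : BMat IA IB, (N X).trace = X.trace) ∧
  CompletelyPositive (fun X => ptB (N (ptB X)))

/-- A bipartite quasi-state: Hermitian with trace one. -/
def IsQuasiState {IA IB : Type} [Fintype IA] [Fintype IB] (ρ : BMat IA IB) : Prop :=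
  ρ.IsHermitian ∧ ρ.trace = 1

/-- A bipartite quantum state: positive semidefinite with trace one. -/
def IsState {IA IB : Type} [Fintype IA] [Fintype IB] (ρ : BMat IA IB) : Prop :=
  ρ.PosSemidef ∧ ρ.trace = 1

/-- The maximally entangled state `Φ^d = (1/d) ∑_{i,j} |ii⟩⟨jj|`. -/
noncomputable def MES (d : ℕ) : BMat (Fin d) (Fin d) :=
  fun p q => if p.1 = p.2 ∧ q.1 = q.2 then (1 : ℂ) / d else 0

/-- `n`-fold tensor (Kronecker) power, with all `A` factors grouped against all `B` factors. -/
def tensorPow {IA IB : Type} (ρ : BMat IA IB) (n : ℕ) :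
    BMat (Fin n → IA) (Fin n → IB) :=
  fun p q => ∏ i : Fin n, ρ (p.1 i, p.2 i) (q.1 i, q.2 i)

/-- Tensor (Kronecker) product of two bipartite matrices, grouping `A` systems together
and `B` systems together. -/
def tensorMul {IA IB JA JB : Type} (ρ : BMat IA IB) (σ : BMat JA JB) :
    BMat (IA × JA) (IB × JB) :=
  fun p q => ρ (p.1.1, p.2.1) (q.1.1, q.2.1) * σ (p.1.2, p.2.2) (q.1.2, q.2.2)

/-- One-shot exact distillable entanglement under PPTq operations. -/
noncomputable def oneShotDistill {IA IB : Type} [Fintype IA] [Fintype IB]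
    (ρ : BMat IA IB) : ℝ :=
  sSup { x : ℝ | ∃ d : ℕ, 0 < d ∧ x = Real.logb 2 d ∧
    ∃ Λ : BMat IA IB →ₗ[ℂ] BMat (Fin d) (Fin d), IsPPTq Λ ∧ Λ ρ = MES d }

/-- One-shot exact entanglement cost under PPTq operations. -/
noncomputable def oneShotCost {IA IB : Type} [Fintype IA] [Fintype IB]
    (ρ : BMat IA IB) : ℝ :=
  sInf { x : ℝ | ∃ d : ℕ, 0 < d ∧ x = Real.logb 2 d ∧
    ∃ Λ : BMat (Fin d) (Fin d) →ₗ[ℂ] BMat IA IB, IsPPTq Λ ∧ Λ (MES d) = ρ }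

/-- The one-shot distillation error for `n` copies towards `Φ^d`, optimized over PPTq operations. -/
noncomputable def distillErr {IA IB : Type} [Fintype IA] [Fintype IB]
    [DecidableEq IA] [DecidableEq IB] (ρ : BMat IA IB) (n d : ℕ) : ℝ :=
  sInf { e : ℝ | ∃ Λ : BMat (Fin n → IA) (Fin n → IB) →ₗ[ℂ] BMat (Fin d) (Fin d),
    IsPPTq Λ ∧ e = traceNorm (Λ (tensorPow ρ n) - MES d) }

/-- The one-shot dilution error for preparing `n` copies from `Φ^d`, optimized over PPTq operations. -/
noncomputable def costErr {IA IB : Type} [Fintype IA] [Fintype IB]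
    [DecidableEq IA] [DecidableEq IB] (ρ : BMat IA IB) (n d : ℕ) : ℝ :=
  sInf { e : ℝ | ∃ Λ : BMat (Fin d) (Fin d) →ₗ[ℂ] BMat (Fin n → IA) (Fin n → IB),
    IsPPTq Λ ∧ e = traceNorm (tensorPow ρ n - Λ (MES d)) }

/-- Distillable entanglement under PPTq operations (asymptotically vanishing error). -/
noncomputable def EDppt {IA IB : Type} [Fintype IA] [Fintype IB]
    [DecidableEq IA] [DecidableEq IB] (ρ : BMat IA IB) : ℝ :=
  sSup { r : ℝ | Filter.Tendsto (fun n : ℕ => distillErr ρ n (2 ^ ⌊r * n⌋₊))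
    Filter.atTop (nhds 0) }

/-- Entanglement cost under PPTq operations (asymptotically vanishing error). -/
noncomputable def ECppt {IA IB : Type} [Fintype IA] [Fintype IB]
    [DecidableEq IA] [DecidableEq IB] (ρ : BMat IA IB) : ℝ :=
  sInf { r : ℝ | Filter.Tendsto (fun n : ℕ => costErr ρ n (2 ^ ⌈r * n⌉₊))
    Filter.atTop (nhds 0) }

/-- Tempered negativity `N_τ(σ | ρ)`. -/
noncomputable def temperedNeg {IA IB : Type} [Fintype IA] [Fintype IB]
    [DecidableEq IA] [DecidableEq IB] (σ ρ : BMat IA IB) : ℝ :=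
  sSup { t : ℝ | ∃ X : Matrix (IA × IB) (IA × IB) ℂ, X.IsHermitian ∧
    opNorm (ptB X) ≤ 1 ∧ (X * ρ).trace = (opNorm X : ℂ) ∧ (X * σ).trace = (t : ℂ) }

/-- Asymptotic exact conversion rate under PPTq operations. -/
noncomputable def convRate {IA IB JA JB : Type} [Fintype IA] [Fintype IB]
    [Fintype JA] [Fintype JB]
    (ρ : BMat IA IB) (σ : BMat JA JB) : ℝ :=
  sSup { r : ℝ | 0 ≤ r ∧ ∀ᶠ n : ℕ in Filter.atTop,
    ∃ Λ : BMat (Fin n → IA) (Fin n → IB) →ₗ[ℂ]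
          BMat (Fin ⌊r * n⌋₊ → JA) (Fin ⌊r * n⌋₊ → JB),
      IsPPTq Λ ∧ Λ (tensorPow ρ n) = tensorPow σ ⌊r * n⌋₊ }


/-! Split `ρ^{T_B} = P - Q` into its positive and negative parts, so that
`‖ρ^{T_B}‖₁ = tr P + tr Q`. The map `Φ = T_{B'} ∘ N ∘ T_B` is positive and trace preserving and
`σ^{T_{B'}} = Φ P - Φ Q`. Testing a difference of positive matrices against its own eigenbasis
shows that its trace norm is at most the sum of their traces, hence
`‖σ^{T_{B'}}‖₁ ≤ tr Φ P + tr Φ Q = tr P + tr Q`. Finally `‖σ^{T_{B'}}‖₁ ≥ |tr σ| = 1`, so the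
logarithm is monotone on the relevant range. -/

open scoped Matrix MatrixOrder

namespace Matrix

variable {𝕜 n ι : Type*} [RCLike 𝕜] [Fintype n] [Fintype ι]

lemma trace_eq_sum_star_dotProduct_mulVec (A : Matrix n n 𝕜)
    (b : OrthonormalBasis ι 𝕜 (EuclideanSpace 𝕜 n)) :
    A.trace = ∑ i, star ⇑(b i) ⬝ᵥ A *ᵥ ⇑(b i) := by
  classical
  rw [← trace_toLin_eq A (PiLp.basisFun 2 𝕜 n), ← toLpLin_eq_toLin,
    LinearMap.trace_eq_sum_inner _ b]
  simp [EuclideanSpace.inner_eq_star_dotProduct, toLpLin_apply, dotProduct_comm]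

lemma IsHermitian.re_trace_cfc [DecidableEq n] {A : Matrix n n 𝕜} (hA : A.IsHermitian)
    (f : ℝ → ℝ) : RCLike.re (cfc f A).trace = ∑ i, f (hA.eigenvalues i) := by
  rw [hA.cfc_eq, IsHermitian.cfc, Unitary.conjStarAlgAut_apply, trace_mul_cycle,
    Unitary.coe_star_mul_self, one_mul, trace_diagonal, map_sum]
  simp

end Matrix

open Matrix

section TraceNorm

variable {n : Type} [Fintype n] [DecidableEq n]

-- `traceNorm X` is, by definition, the spectral formula for `cfc Real.sqrt (Xᴴ * X)`.
lemma traceNorm_eq_re_trace_abs (X : Matrix n n ℂ) : traceNorm X = (CFC.abs X).trace.re := by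
  have hXX : (star X * X).PosSemidef := posSemidef_conjTranspose_mul_self X
  rw [traceNorm, CFC.abs, CFC.sqrt_eq_real_sqrt _ (nonneg_iff_posSemidef.mpr hXX), cfcₙ_eq_cfc,
    hXX.1.cfc_eq]
  rfl

lemma Matrix.IsHermitian.traceNorm_eq_sum_abs_eigenvalues {X : Matrix n n ℂ}
    (hX : X.IsHermitian) : traceNorm X = ∑ i, |hX.eigenvalues i| := by
  rw [traceNorm_eq_re_trace_abs, CFC.abs_eq_cfc_norm X hX.isSelfAdjoint]
  exact hX.re_trace_cfc _

lemma Matrix.IsHermitian.traceNorm_eq_re_trace_posPart_add_negPart {X : Matrix n n ℂ}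
    (hX : X.IsHermitian) : traceNorm X = X⁺.trace.re + X⁻.trace.re := by
  rw [traceNorm_eq_re_trace_abs, ← CFC.posPart_add_negPart X hX.isSelfAdjoint, trace_add,
    Complex.add_re]

lemma Matrix.IsHermitian.abs_re_trace_le_traceNorm {X : Matrix n n ℂ} (hX : X.IsHermitian) :
    |X.trace.re| ≤ traceNorm X := by
  rw [hX.traceNorm_eq_sum_abs_eigenvalues, hX.trace_eq_sum_eigenvalues, Complex.re_sum]
  simpa using Finset.abs_sum_le_sum_abs _ _

lemma traceNorm_sub_le {P Q : Matrix n n ℂ} (hP : P.PosSemidef) (hQ : Q.PosSemidef) :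
    traceNorm (P - Q) ≤ P.trace.re + Q.trace.re := by
  have hPQ : (P - Q).IsHermitian := hP.1.sub hQ.1
  set v := hPQ.eigenvectorBasis
  rw [hPQ.traceNorm_eq_sum_abs_eigenvalues, trace_eq_sum_star_dotProduct_mulVec P v,
    trace_eq_sum_star_dotProduct_mulVec Q v, Complex.re_sum, Complex.re_sum,
    ← Finset.sum_add_distrib]
  refine Finset.sum_le_sum fun i _ => ?_
  have hp : 0 ≤ (star ⇑(v i) ⬝ᵥ P *ᵥ ⇑(v i)).re := hP.re_dotProduct_nonneg _
  have hq : 0 ≤ (star ⇑(v i) ⬝ᵥ Q *ᵥ ⇑(v i)).re := hQ.re_dotProduct_nonneg _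
  have heig : hPQ.eigenvalues i =
      (star ⇑(v i) ⬝ᵥ P *ᵥ ⇑(v i)).re - (star ⇑(v i) ⬝ᵥ Q *ᵥ ⇑(v i)).re := by
    rw [hPQ.eigenvalues_eq, sub_mulVec, dotProduct_sub]
    rfl
  exact heig ▸ abs_le.mpr ⟨by linarith, by linarith⟩

lemma traceNorm_map_le {m : Type} [Fintype m] [DecidableEq m]
    (f : Matrix n n ℂ →ₗ[ℂ] Matrix m m ℂ) (hpos : ∀ X, X.PosSemidef → (f X).PosSemidef)
    (htrace : ∀ X, (f X).trace = X.trace) {X : Matrix n n ℂ} (hX : X.IsHermitian) :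
    traceNorm (f X) ≤ traceNorm X := by
  have hfX : f X = f X⁺ - f X⁻ := by rw [← map_sub, CFC.posPart_sub_negPart X hX.isSelfAdjoint]
  calc traceNorm (f X) ≤ (f X⁺).trace.re + (f X⁻).trace.re :=
        hfX ▸ traceNorm_sub_le (hpos _ (nonneg_iff_posSemidef.mp (CFC.posPart_nonneg X)))
          (hpos _ (nonneg_iff_posSemidef.mp (CFC.negPart_nonneg X)))
    _ = traceNorm X := by rw [htrace, htrace, hX.traceNorm_eq_re_trace_posPart_add_negPart]

end TraceNorm

section PartialTranspose

variable {IA IB : Type}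

def ptBLinearMap : BMat IA IB →ₗ[ℂ] BMat IA IB where
  toFun := ptB
  map_add' _ _ := rfl
  map_smul' _ _ := rfl

lemma trace_ptB [Fintype IA] [Fintype IB] (X : BMat IA IB) : (ptB X).trace = X.trace := rfl

lemma Matrix.IsHermitian.ptB {X : BMat IA IB} (hX : X.IsHermitian) : (ptB X).IsHermitian :=
  Matrix.ext fun p q => congrFun (congrFun hX (p.1, q.2)) (q.1, p.2)

end PartialTranspose

lemma CompletelyPositive.map_posSemidef {I J : Type} [Fintype I] [Fintype J]
    {f : Matrix I I ℂ → Matrix J J ℂ} (hf : CompletelyPositive f) {X : Matrix I I ℂ}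
    (hX : X.PosSemidef) : (f X).PosSemidef := by
  have h := hf 1 (X.submatrix Prod.snd Prod.snd) (hX.submatrix _)
  exact h.submatrix (fun j => ((0 : Fin 1), j))

/-- A PPTq operation cannot increase the trace norm of the partial
transpose, hence cannot increase the logarithmic negativity. -/
theorem PPTq_traceNorm_ptB_mono {dA dB dA' dB' : ℕ}
    (N : BMat (Fin dA) (Fin dB) →ₗ[ℂ] BMat (Fin dA') (Fin dB')) (hN : IsPPTq N)
    (ρ : BMat (Fin dA) (Fin dB)) (hρ : IsQuasiState ρ)
    (σ : BMat (Fin dA') (Fin dB')) (hσ : N ρ = σ) :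
    traceNorm (ptB σ) ≤ traceNorm (ptB ρ) ∧ EN σ ≤ EN ρ := by
  obtain ⟨hNherm, hNtrace, hNcp⟩ := hN
  let Φ := ptBLinearMap ∘ₗ N ∘ₗ ptBLinearMap
  have hΦρ : Φ (ptB ρ) = ptB σ := by rw [← hσ]; rfl
  have hle : traceNorm (ptB σ) ≤ traceNorm (ptB ρ) :=
    hΦρ ▸ traceNorm_map_le Φ (fun _ hX => hNcp.map_posSemidef hX) (fun X => hNtrace (ptB X))
      hρ.1.ptB
  have htrace : (ptB σ).trace = 1 := by rw [trace_ptB, ← hσ, hNtrace, hρ.2]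
  have hone : 1 ≤ traceNorm (ptB σ) := by
    have h := (hσ ▸ hNherm ρ hρ.1).ptB.abs_re_trace_le_traceNorm
    rwa [htrace, Complex.one_re, abs_one] at h
  exact ⟨hle, Real.logb_le_logb_of_le one_lt_two (by linarith) hle⟩
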